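/- arXiv:1902.05324 — 3 statements merged into one kernel-verified Lean document; each statement's English description precedes it below -/
import Mathlib

section
/- Define a sequence of matrices by D_0 = [0] (the 1×1 zero matrix) and D_{n+1} = (1/2)·[[D_n, I],[I, D_n]] (a 2^{n+1}×2^{n+1} block matrix with identity off-diagonal blocks). Then for every n ≥ 1, D_n is invertible. -/
open Matrix

noncomputable def Dmat : (n : ℕ) → Matrix (Fin (2 ^ n)) (Fin (2 ^ n)) ℝ
  | 0 => 0
  | n + 1 =>
      Matrix.reindex (finSumFinEquiv.trans (finCongr (by ring : 2 ^ n + 2 ^ n = 2 ^ (n + 1))))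
        (finSumFinEquiv.trans (finCongr (by ring)))
        ((1 / 2 : ℝ) • Matrix.fromBlocks (Dmat n) 1 1 (Dmat n))

/-- `μ` is an eigenvalue of the square matrix `A`. -/
def HasEig {m : ℕ} (A : Matrix (Fin m) (Fin m) ℝ) (μ : ℝ) : Prop :=
  ∃ v : Fin m → ℝ, v ≠ 0 ∧ A.mulVec v = μ • v

lemma Dmat_bound : ∀ (n : ℕ) (v : Fin (2 ^ n) → ℝ) (M : ℝ), 0 ≤ M → (∀ i, |v i| ≤ M) →
    ∀ i, |(Dmat n).mulVec v i| ≤ (1 - (1 / 2) ^ n) * M := by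
  intro n
  induction n with
  | zero =>
    intro v M hM hv i
    simp [Dmat]
  | succ n ih =>
    intro v M hM hv i
    rw [show Dmat (n + 1) =
      Matrix.reindex (finSumFinEquiv.trans (finCongr (by ring : 2 ^ n + 2 ^ n = 2 ^ (n + 1))))
        (finSumFinEquiv.trans (finCongr (by ring)))
        ((1 / 2 : ℝ) • Matrix.fromBlocks (Dmat n) 1 1 (Dmat n)) from rfl]
    set e := (finSumFinEquiv.trans (finCongr (by ring : 2 ^ n + 2 ^ n = 2 ^ (n + 1))))
    rw [Matrix.reindex_apply, Matrix.submatrix_mulVec_equiv]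
    set w : Fin (2 ^ n) ⊕ Fin (2 ^ n) → ℝ := v ∘ e.symm.symm with hw
    have hwb : ∀ j, |w j| ≤ M := fun j => hv _
    simp only [Function.comp_apply, Matrix.smul_mulVec]
    have key : ∀ j, |((Matrix.fromBlocks (Dmat n) 1 1 (Dmat n)).mulVec w) j|
        ≤ (1 - (1 / 2) ^ n) * M + M := by
      intro j
      rw [Matrix.fromBlocks_mulVec]
      have h1 := ih (w ∘ Sum.inl) M hM (fun k => hwb _)
      have h2 := ih (w ∘ Sum.inr) M hM (fun k => hwb _)
      cases j with
      | inl j =>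
        simp only [Sum.elim_inl, Pi.add_apply, Matrix.one_mulVec]
        calc |(Dmat n).mulVec (w ∘ Sum.inl) j + (w ∘ Sum.inr) j|
            ≤ |(Dmat n).mulVec (w ∘ Sum.inl) j| + |(w ∘ Sum.inr) j| := abs_add_le _ _
          _ ≤ (1 - (1 / 2) ^ n) * M + M := add_le_add (h1 j) (hwb _)
      | inr j =>
        simp only [Sum.elim_inr, Pi.add_apply, Matrix.one_mulVec]
        calc |(w ∘ Sum.inl) j + (Dmat n).mulVec (w ∘ Sum.inr) j|
            ≤ |(w ∘ Sum.inl) j| + |(Dmat n).mulVec (w ∘ Sum.inr) j| := abs_add_le _ _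
          _ ≤ M + (1 - (1 / 2) ^ n) * M := add_le_add (hwb _) (h2 j)
          _ = (1 - (1 / 2) ^ n) * M + M := by ring
    calc |((1 / 2 : ℝ) • (Matrix.fromBlocks (Dmat n) 1 1 (Dmat n)).mulVec w) (e.symm i)|
        = (1 / 2) * |((Matrix.fromBlocks (Dmat n) 1 1 (Dmat n)).mulVec w) (e.symm i)| := by
          rw [Pi.smul_apply, smul_eq_mul, abs_mul]; norm_num
      _ ≤ (1 / 2) * ((1 - (1 / 2) ^ n) * M + M) := by
          have := key (e.symm i); linarith
      _ = (1 - (1 / 2) ^ (n + 1)) * M := by ring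

theorem Dmat_invertible (n : ℕ) (hn : 1 ≤ n) : IsUnit (Dmat n) := by
  obtain ⟨m, rfl⟩ := Nat.exists_eq_add_of_le hn
  rw [add_comm] at *
  set c : ℝ := 1 - (1 / 2) ^ m with hc
  have hc0 : 0 ≤ c := by
    have : (1 / 2 : ℝ) ^ m ≤ 1 := pow_le_one₀ (by norm_num) (by norm_num)
    rw [hc]; linarith
  have hc1 : c < 1 := by
    have : (0 : ℝ) < (1 / 2) ^ m := by positivity
    simp only [hc]; linarith
  rw [show Dmat (m + 1) =
      Matrix.reindex (finSumFinEquiv.trans (finCongr (by ring : 2 ^ m + 2 ^ m = 2 ^ (m + 1))))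
        (finSumFinEquiv.trans (finCongr (by ring)))
        ((1 / 2 : ℝ) • Matrix.fromBlocks (Dmat m) 1 1 (Dmat m)) from rfl]
  rw [Matrix.isUnit_iff_isUnit_det, Matrix.det_reindex_self, Matrix.det_smul,
    isUnit_iff_ne_zero]
  apply mul_ne_zero (pow_ne_zero _ (by norm_num))
  rw [← isUnit_iff_ne_zero, ← Matrix.isUnit_iff_isUnit_det,
    ← Matrix.mulVec_injective_iff_isUnit]
  have hker : ∀ w, (Matrix.fromBlocks (Dmat m) 1 1 (Dmat m)).mulVec w = 0 → w = 0 := by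
    intro w hw
    rw [Matrix.fromBlocks_mulVec] at hw
    set x := w ∘ Sum.inl with hx
    set y := w ∘ Sum.inr with hy
    have h1 : y = -(Dmat m).mulVec x := by
      funext j
      have := congr_fun hw (Sum.inl j)
      simp only [Sum.elim_inl, Pi.add_apply, Matrix.one_mulVec, Pi.zero_apply] at this
      simp only [Pi.neg_apply]
      linarith
    have h2 : ∀ j, x j + (Dmat m).mulVec y j = 0 := by
      intro j
      have := congr_fun hw (Sum.inr j)
      simpa [Matrix.one_mulVec] using this
    have hxeq : x = (Dmat m).mulVec ((Dmat m).mulVec x) := by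
      funext j
      have := h2 j
      rw [h1, Matrix.mulVec_neg] at this
      simp only [Pi.neg_apply] at this
      linarith
    have hx0 : x = 0 := by
      by_contra hne
      obtain ⟨j0, hj0⟩ := Function.ne_iff.mp hne
      set M := Finset.univ.sup' ⟨j0, Finset.mem_univ j0⟩ (fun j => |x j|) with hM
      have hMle : ∀ j, |x j| ≤ M := fun j => by rw [hM]; exact Finset.le_sup' (fun j => |x j|) (Finset.mem_univ j)
      have hM0 : 0 < M := lt_of_lt_of_le (abs_pos.mpr hj0) (hMle j0)
      have hb1 := Dmat_bound m x M hM0.le hMle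
      have hb2 := Dmat_bound m ((Dmat m).mulVec x) ((1 - (1 / 2) ^ m) * M)
        (mul_nonneg hc0 hM0.le) hb1
      have hMc : M ≤ c * (c * M) := by
        rw [hM]
        apply Finset.sup'_le
        intro j _
        have := hb2 j
        rw [← congr_fun hxeq j] at this
        exact this
      have hcc : c * c < 1 := by nlinarith
      nlinarith [mul_lt_mul_of_pos_right hcc hM0]
    have hy0 : y = 0 := by
      rw [h1, hx0, Matrix.mulVec_zero, neg_zero]
    funext j
    cases j with
    | inl j => exact congr_fun hx0 j
    | inr j => exact congr_fun hy0 j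
  intro a b hab
  have : (Matrix.fromBlocks (Dmat m) 1 1 (Dmat m)).mulVec (a - b) = 0 := by
    rw [Matrix.mulVec_sub, hab, sub_self]
  have := hker _ this
  exact sub_eq_zero.mp this
end

section
/- Define D_0 = [0] and D_{n+1} = (1/2)·[[D_n, I],[I, D_n]]. Then for every n ≥ 1, the multiset of eigenvalues of D_n is {±(2k+1)/2^n : k = 0, 1, …, 2^{n-1}−1}, each appearing with multiplicity one (so 2^n eigenvalues in total). -/
open Matrix

open Polynomial in
lemma det_blocks {m R : Type*} [Fintype m] [DecidableEq m] [CommRing R]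
    (P Q : Matrix m m R) :
    (Matrix.fromBlocks P Q Q P).det = (P + Q).det * (P - Q).det := by
  have hL : (Matrix.fromBlocks 1 1 0 1 : Matrix (m ⊕ m) (m ⊕ m) R).det = 1 := by
    rw [Matrix.det_fromBlocks_zero₂₁]; simp
  have hR : (Matrix.fromBlocks 1 (-1) 0 1 : Matrix (m ⊕ m) (m ⊕ m) R).det = 1 := by
    rw [Matrix.det_fromBlocks_zero₂₁]; simp
  have key : Matrix.fromBlocks 1 1 0 1 * Matrix.fromBlocks P Q Q P *
      Matrix.fromBlocks 1 (-1) 0 1 =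
      Matrix.fromBlocks (P + Q) 0 Q (P - Q) := by
    rw [Matrix.fromBlocks_multiply, Matrix.fromBlocks_multiply]
    rw [Matrix.fromBlocks_inj]
    refine ⟨by noncomm_ring, by noncomm_ring, by simp, by noncomm_ring⟩
  have := congrArg Matrix.det key
  rw [Matrix.det_mul, Matrix.det_mul, hL, hR, Matrix.det_fromBlocks_zero₁₂] at this
  simpa using this

open Polynomial in
lemma charmatrix_add_smul_one {m : Type*} [Fintype m] [DecidableEq m]
    (W : Matrix m m ℝ) (c : ℝ) :
    charmatrix (W + c • (1 : Matrix m m ℝ)) = charmatrix W - (c • (1 : Matrix m m ℝ)).map C := by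
  ext i j
  by_cases h : i = j <;>
    simp [h, Matrix.charmatrix_apply_eq, Matrix.charmatrix_apply_ne, Matrix.one_apply,
      Matrix.smul_apply, sub_sub]

open Polynomial in
lemma map_neg_smul_one {m : Type*} [Fintype m] [DecidableEq m] (c : ℝ) :
    ((-c) • (1 : Matrix m m ℝ)).map C = -((c • (1 : Matrix m m ℝ)).map C) := by
  ext i j
  simp [Matrix.one_apply, apply_ite]

noncomputable def Emul : ℕ → Multiset ℝ
  | 0 => {0}
  | n + 1 => (Emul n).map (fun r => (r + 1) / 2) + (Emul n).map (fun r => (r - 1) / 2)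

lemma range_succ' (m : ℕ) :
    Multiset.range (m + 1) = 0 ::ₘ (Multiset.range m).map (· + 1) := by
  rw [show m + 1 = 1 + m from Nat.add_comm _ _, Multiset.range_add]
  rw [show Multiset.range 1 = {0} from rfl, Multiset.singleton_add]
  congr 1
  exact Multiset.map_congr rfl (fun k _ => Nat.add_comm 1 k)

lemma range_reverse : ∀ m : ℕ, (Multiset.range m).map (fun k => m - 1 - k) = Multiset.range m
  | 0 => rfl
  | m + 1 => by
      conv_rhs => rw [range_succ' m]
      rw [Multiset.range_succ, Multiset.map_cons]
      have h1 : (Multiset.range m).map (fun k => m + 1 - 1 - k) =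
          (Multiset.range m).map (fun k => (m - 1 - k) + 1) := by
        apply Multiset.map_congr rfl
        intro k hk
        rw [Multiset.mem_range] at hk
        omega
      have h2 : (Multiset.range m).map (fun k => (m - 1 - k) + 1) =
          ((Multiset.range m).map (fun k => m - 1 - k)).map (· + 1) := by
        rw [Multiset.map_map]; rfl
      rw [h1, h2, range_reverse m]
      norm_num

lemma range_double (m : ℕ) (h : ℕ → ℝ) :
    (Multiset.range (2 * m)).map h =
      (Multiset.range m).map (fun k => h (k + m)) +
        (Multiset.range m).map (fun k => h (m - 1 - k)) := by
  rw [show 2 * m = m + m from by ring, Multiset.range_add, Multiset.map_add, Multiset.map_map,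
    add_comm]
  congr 1
  · exact Multiset.map_congr rfl (fun k _ => by simp [Nat.add_comm])
  · conv_rhs => rw [← range_reverse m]
    rw [Multiset.map_map]
    refine Multiset.map_congr rfl (fun k hk => ?_)
    rw [Multiset.mem_range] at hk
    simp only [Function.comp_apply]
    congr 1
    omega

lemma Emul_succ_eq (m : ℕ) :
    Emul (m + 1) =
      (Multiset.range (2 ^ m)).map (fun k : ℕ => ((2 * k + 1 : ℝ) / 2 ^ (m + 1))) +
        (Multiset.range (2 ^ m)).map (fun k : ℕ => -((2 * k + 1 : ℝ) / 2 ^ (m + 1))) := by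
  induction m with
  | zero =>
      rw [show Multiset.range (2 ^ 0) = {0} from rfl]
      simp [Emul]
      norm_num
  | succ m ih =>
      rw [show Emul (m + 2) = (Emul (m+1)).map (fun r => (r + 1) / 2) +
        (Emul (m+1)).map (fun r => (r - 1) / 2) from rfl, ih]
      simp only [Multiset.map_add, Multiset.map_map]
      rw [show (2:ℕ) ^ (m + 1) = 2 * 2 ^ m from by ring,
        range_double (2 ^ m) (fun k : ℕ => ((2 * k + 1 : ℝ) / 2 ^ (m + 2))),
        range_double (2 ^ m) (fun k : ℕ => -((2 * k + 1 : ℝ) / 2 ^ (m + 2)))]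
      have c1 : (Multiset.range (2 ^ m)).map
          ((fun r : ℝ => (r + 1) / 2) ∘ fun k : ℕ => ((2 * k + 1 : ℝ) / 2 ^ (m + 1))) =
          (Multiset.range (2 ^ m)).map (fun k : ℕ => ((2 * (k + 2 ^ m) + 1 : ℝ) / 2 ^ (m + 2))) := by
        refine Multiset.map_congr rfl (fun k _ => ?_)
        simp only [Function.comp_apply]
        push_cast
        field_simp
        ring
      have c2 : (Multiset.range (2 ^ m)).map
          ((fun r : ℝ => (r + 1) / 2) ∘ fun k : ℕ => -((2 * k + 1 : ℝ) / 2 ^ (m + 1))) =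
          (Multiset.range (2 ^ m)).map
            (fun k : ℕ => ((2 * ((2 ^ m : ℕ) - 1 - k : ℕ) + 1 : ℝ) / 2 ^ (m + 2))) := by
        refine Multiset.map_congr rfl (fun k hk => ?_)
        rw [Multiset.mem_range] at hk
        simp only [Function.comp_apply]
        have : ((2 ^ m - 1 - k : ℕ) : ℝ) = 2 ^ m - 1 - (k : ℝ) := by
          have h1 : (1 + k) ≤ 2 ^ m := by omega
          push_cast [Nat.sub_sub, Nat.cast_sub h1]
          ring
        rw [this]
        push_cast
        field_simp
        ring
      have c3 : (Multiset.range (2 ^ m)).map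
          ((fun r : ℝ => (r - 1) / 2) ∘ fun k : ℕ => ((2 * k + 1 : ℝ) / 2 ^ (m + 1))) =
          (Multiset.range (2 ^ m)).map
            (fun k : ℕ => -((2 * ((2 ^ m : ℕ) - 1 - k : ℕ) + 1 : ℝ) / 2 ^ (m + 2))) := by
        refine Multiset.map_congr rfl (fun k hk => ?_)
        rw [Multiset.mem_range] at hk
        simp only [Function.comp_apply]
        have : ((2 ^ m - 1 - k : ℕ) : ℝ) = 2 ^ m - 1 - (k : ℝ) := by
          have h1 : (1 + k) ≤ 2 ^ m := by omega
          push_cast [Nat.sub_sub, Nat.cast_sub h1]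
          ring
        rw [this]
        push_cast
        field_simp
        ring
      have c4 : (Multiset.range (2 ^ m)).map
          ((fun r : ℝ => (r - 1) / 2) ∘ fun k : ℕ => -((2 * k + 1 : ℝ) / 2 ^ (m + 1))) =
          (Multiset.range (2 ^ m)).map (fun k : ℕ => -((2 * (k + 2 ^ m) + 1 : ℝ) / 2 ^ (m + 2))) := by
        refine Multiset.map_congr rfl (fun k _ => ?_)
        simp only [Function.comp_apply]
        push_cast
        field_simp
        ring
      rw [c1, c2, c3, c4]
      push_cast
      abel

open Polynomial in
lemma charpoly_affine (n : ℕ) (a b : ℝ) :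
    (a • Dmat n + b • (1 : Matrix (Fin (2 ^ n)) (Fin (2 ^ n)) ℝ)).charpoly =
      ((Emul n).map (fun r => X - C (a * r + b))).prod := by
  induction n generalizing a b with
  | zero =>
      haveI : Unique (Fin (2 ^ 0)) := ⟨⟨0, by norm_num⟩, by intro a; ext; omega⟩
      rw [show Dmat 0 = 0 from rfl]
      rw [Matrix.charpoly, Matrix.det_unique]
      simp [Emul, Matrix.one_apply]
  | succ n ih =>
      set e := (finSumFinEquiv.trans (finCongr (by ring : 2 ^ n + 2 ^ n = 2 ^ (n + 1))))
      have hD : Dmat (n + 1) = Matrix.reindex e e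
          ((1 / 2 : ℝ) • Matrix.fromBlocks (Dmat n) 1 1 (Dmat n)) := rfl
      have h1 : a • Dmat (n + 1) + b • (1 : Matrix (Fin (2 ^ (n+1))) (Fin (2 ^ (n+1))) ℝ) =
          Matrix.reindex e e
            (a • ((1 / 2 : ℝ) • Matrix.fromBlocks (Dmat n) 1 1 (Dmat n)) + b • 1) := by
        rw [hD]
        simp [Matrix.reindex_apply, Matrix.submatrix_add, Matrix.submatrix_smul,
          Matrix.submatrix_one_equiv]
      rw [h1, Matrix.charpoly_reindex]
      have h2 : a • ((1 / 2 : ℝ) • Matrix.fromBlocks (Dmat n) 1 1 (Dmat n)) + b • 1 =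
          Matrix.fromBlocks (( a / 2) • Dmat n + b • 1) ((a / 2) • 1) ((a / 2) • 1)
            ((a / 2) • Dmat n + b • 1) := by
        rw [smul_smul, mul_one_div, Matrix.fromBlocks_smul, ← Matrix.fromBlocks_one,
          Matrix.fromBlocks_smul, Matrix.fromBlocks_add]
        simp
      rw [h2]
      rw [Matrix.charpoly, Matrix.charmatrix_fromBlocks]
      rw [det_blocks]
      have h4 : charmatrix ((a / 2) • Dmat n + b • 1) + -(((a / 2) • (1 : Matrix (Fin (2^n)) (Fin (2^n)) ℝ)).map C)
          = charmatrix (((a / 2) • Dmat n + b • 1) + (a / 2) • 1) := by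
        conv_rhs => rw [charmatrix_add_smul_one]
        rw [← sub_eq_add_neg]
      have h5 : charmatrix ((a / 2) • Dmat n + b • 1) - -(((a / 2) • (1 : Matrix (Fin (2^n)) (Fin (2^n)) ℝ)).map C)
          = charmatrix (((a / 2) • Dmat n + b • 1) + (-(a / 2)) • 1) := by
        conv_rhs => rw [charmatrix_add_smul_one, map_neg_smul_one]
      rw [h4, h5]
      have e1 : ((a / 2) • Dmat n + b • 1) + (a / 2) • (1 : Matrix (Fin (2^n)) (Fin (2^n)) ℝ) =
          (a / 2) • Dmat n + (b + a / 2) • 1 := by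
        rw [add_assoc, ← add_smul]
      have e2 : ((a / 2) • Dmat n + b • 1) + (-(a / 2)) • (1 : Matrix (Fin (2^n)) (Fin (2^n)) ℝ) =
          (a / 2) • Dmat n + (b - a / 2) • 1 := by
        rw [add_assoc, ← add_smul, sub_eq_add_neg]
      rw [e1, e2, ← Matrix.charpoly, ← Matrix.charpoly, ih, ih]
      rw [show Emul (n+1) = (Emul n).map (fun r => (r + 1) / 2) +
        (Emul n).map (fun r => (r - 1) / 2) from rfl]
      rw [Multiset.map_add, Multiset.prod_add, Multiset.map_map, Multiset.map_map]
      congr 1 <;> refine congrArg _ (Multiset.map_congr rfl fun r _ => ?_) <;>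
        simp only [Function.comp_apply] <;> ring_nf


open Polynomial in
theorem Dmat_charpoly_roots (n : ℕ) (hn : 1 ≤ n) :
    (Dmat n).charpoly.roots =
      (Multiset.range (2 ^ (n - 1))).map (fun k : ℕ => ((2 * k + 1 : ℝ) / 2 ^ n)) +
        (Multiset.range (2 ^ (n - 1))).map (fun k : ℕ => -((2 * k + 1 : ℝ) / 2 ^ n)) := by
  obtain ⟨m, rfl⟩ : ∃ m, n = m + 1 := ⟨n - 1, by omega⟩
  have hD : Dmat (m + 1) = (1 : ℝ) • Dmat (m + 1) +
      (0 : ℝ) • (1 : Matrix (Fin (2 ^ (m + 1))) (Fin (2 ^ (m + 1))) ℝ) := by simp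
  rw [hD, charpoly_affine]
  have hf : (fun r : ℝ => X - C (1 * r + 0)) = fun r : ℝ => X - C r := by
    funext r; norm_num
  rw [hf, Polynomial.roots_multiset_prod_X_sub_C, Emul_succ_eq]
  norm_num
end

section
/- Let u = (σ_x − σ_z)/√2 and define D_n by D_0 = [0], D_{n+1} = (1/2)·[[D_n, I],[I, D_n]]. Then for every n ≥ 1, the matrix u^{⊗n} (n-fold Kronecker power of u) diagonalizes D_n: u^{⊗n} D_n u^{⊗n} is a diagonal matrix. -/
open Matrix

open Kronecker

noncomputable def uMat : Matrix (Fin 2) (Fin 2) ℝ :=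
  (Real.sqrt 2)⁻¹ • (!![0, 1; 1, 0] - !![1, 0; 0, -1])

/-- The `n`-fold Kronecker power of `uMat`. -/
noncomputable def uKron : (n : ℕ) → Matrix (Fin (2 ^ n)) (Fin (2 ^ n)) ℝ
  | 0 => 1
  | n + 1 =>
      Matrix.reindex (finProdFinEquiv.trans (finCongr (by ring : 2 * 2 ^ n = 2 ^ (n + 1))))
        (finProdFinEquiv.trans (finCongr (by ring)))
        (uMat ⊗ₖ uKron n)

/-!
Write `X = σ_x`. Since `u² = 1` and `u X u = -σ_z` is diagonal, and since reindexing
`Fin 2 × Fin (2^n)` as two blocks turns the recurrence into `D_{n+1} = ½ (1 ⊗ D_n + X ⊗ 1)`,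
conjugating by `u^{⊗(n+1)} = u ⊗ u^{⊗n}` gives `½ (1 ⊗ u^{⊗n} D_n u^{⊗n} + (u X u) ⊗ 1)`,
which is diagonal by induction.
-/

open Kronecker

lemma uMat_eq : uMat = !![-(√2)⁻¹, (√2)⁻¹; (√2)⁻¹, (√2)⁻¹] := by
  ext i j; fin_cases i <;> fin_cases j <;> simp [uMat]

lemma uMat_mul_uMat : uMat * uMat = 1 := by
  rw [uMat_eq, mul_fin_two, one_fin_two]
  congr 1; ring_nf; simp

lemma uMat_mul_sigmaX_mul_uMat : uMat * !![0, 1; 1, 0] * uMat = !![(-1 : ℝ), 0; 0, 1] := by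
  rw [uMat_eq, mul_fin_two, mul_fin_two]
  congr 1; ring_nf; simp

lemma uKron_mul_uKron : ∀ n, uKron n * uKron n = 1
  | 0 => by simp [uKron]
  | n + 1 => by
      rw [uKron, reindex_apply, submatrix_mul_equiv, ← mul_kronecker_mul, uMat_mul_uMat,
        uKron_mul_uKron n, one_kronecker_one, submatrix_one_equiv]

/-- `(0, i) ↦ inl i` and `(1, i) ↦ inr i`. -/
def finTwoProdEquivSum (ι : Type*) : Fin 2 × ι ≃ ι ⊕ ι :=
  (finTwoEquiv.prodCongr (Equiv.refl ι)).trans (Equiv.boolProdEquivSum ι)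

lemma reindex_finTwoProdEquivSum_kronecker {ι R : Type*} [DecidableEq ι] [Semiring R]
    (A B : Matrix ι ι R) :
    reindex (finTwoProdEquivSum ι) (finTwoProdEquivSum ι) (1 ⊗ₖ A + !![0, 1; 1, 0] ⊗ₖ B) =
      fromBlocks A B B A := by
  ext (i | i) (j | j) <;> simp [finTwoProdEquivSum, finTwoEquiv, one_apply]

lemma finProdFinEquiv_two_pow (n : ℕ) :
    finProdFinEquiv.trans (finCongr (by ring : 2 * 2 ^ n = 2 ^ (n + 1))) =
      (finTwoProdEquivSum _).trans
        (finSumFinEquiv.trans (finCongr (by ring : 2 ^ n + 2 ^ n = 2 ^ (n + 1)))) := by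
  ext ⟨a, i⟩
  fin_cases a <;> simp [finTwoProdEquivSum, finTwoEquiv, finProdFinEquiv, finSumFinEquiv]

lemma Dmat_succ (n : ℕ) :
    Dmat (n + 1) =
      reindex (finProdFinEquiv.trans (finCongr (by ring : 2 * 2 ^ n = 2 ^ (n + 1))))
        (finProdFinEquiv.trans (finCongr (by ring)))
        ((1 / 2 : ℝ) • (1 ⊗ₖ Dmat n + !![0, 1; 1, 0] ⊗ₖ 1)) := by
  rw [Dmat, finProdFinEquiv_two_pow, ← reindex_finTwoProdEquivSum_kronecker]
  simp only [reindex_apply, submatrix_smul]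
  rfl

lemma isDiag_kronecker_conj {m n R : Type*} [Fintype m] [Fintype n] [DecidableEq m]
    [DecidableEq n] [CommRing R] {U X : Matrix m m R} {V D : Matrix n n R}
    (hU : U * U = 1) (hV : V * V = 1) (hX : (U * X * U).IsDiag) (hD : (V * D * V).IsDiag) :
    ((U ⊗ₖ V) * (1 ⊗ₖ D + X ⊗ₖ 1) * (U ⊗ₖ V)).IsDiag := by
  rw [mul_add, add_mul, ← mul_kronecker_mul, ← mul_kronecker_mul, ← mul_kronecker_mul,
    ← mul_kronecker_mul, mul_one, mul_one, hU, hV]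
  exact (isDiag_one.kronecker hD).add (hX.kronecker isDiag_one)

theorem uKron_diagonalizes_Dmat_general (n : ℕ) :
    (uKron n * Dmat n * uKron n).IsDiag := by
  induction n with
  | zero => simp [Dmat]
  | succ n ih =>
    have hX : (uMat * !![0, 1; 1, 0] * uMat).IsDiag := by
      rw [uMat_mul_sigmaX_mul_uMat, isDiag_iff_diagonal_diag]
      ext i j; fin_cases i <;> fin_cases j <;> simp
    have hconj := (isDiag_kronecker_conj uMat_mul_uMat (uKron_mul_uKron n) hX ih).smul (1 / 2 : ℝ)
    rw [Dmat_succ, uKron, reindex_apply, reindex_apply, submatrix_mul_equiv,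
      submatrix_mul_equiv, Matrix.mul_smul, Matrix.smul_mul]
    exact hconj.submatrix (Equiv.injective _)

theorem uKron_diagonalizes_Dmat (n : ℕ) (hn : 1 ≤ n) :
    (uKron n * Dmat n * uKron n).IsDiag :=
  uKron_diagonalizes_Dmat_general n
end
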